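/- Let G be a finite simple graph containing no theta, pyramid, prism, or turtle as an induced subgraph, let H be a hole in G, and let u and v each be major for H or a clone of some vertex of H, such that u and v are nested with respect to H and uv ∈ E(G). Then u and v have a common neighbor in H. -/

import Mathlib

namespace Paper

open SimpleGraph

variable {V : Type*}

/-- The set of neighbors of `v` inside the set `H`. -/
def nbrsIn (G : SimpleGraph V) (v : V) (H : Set V) : Set V :=
  {u | u ∈ H ∧ G.Adj v u}

/-- The vertex set of a walk. -/
def supp {G : SimpleGraph V} {a b : V} (P : G.Walk a b) : Set V :=
  {v | v ∈ P.support}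

/-- `H` is a hole of `G`: an induced cycle of length at least 4.  (A finite
graph is a cycle iff it is connected and `2`-regular.) -/
def IsHole (G : SimpleGraph V) (H : Set V) : Prop :=
  H.Finite ∧ 4 ≤ H.ncard ∧ (G.induce H).Connected ∧
    ∀ v ∈ H, (nbrsIn G v H).ncard = 2

/-- `G` contains a theta as an induced subgraph. -/
def HasTheta (G : SimpleGraph V) : Prop :=
  ∃ (a b : V) (P₁ P₂ P₃ : G.Walk a b),
    a ≠ b ∧ ¬ G.Adj a b ∧
    P₁.IsPath ∧ P₂.IsPath ∧ P₃.IsPath ∧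
    2 ≤ P₁.length ∧ 2 ≤ P₂.length ∧ 2 ≤ P₃.length ∧
    (∀ v, v ∈ P₁.support → v ∈ P₂.support → v = a ∨ v = b) ∧
    (∀ v, v ∈ P₁.support → v ∈ P₃.support → v = a ∨ v = b) ∧
    (∀ v, v ∈ P₂.support → v ∈ P₃.support → v = a ∨ v = b) ∧
    IsHole G (supp P₁ ∪ supp P₂) ∧
    IsHole G (supp P₁ ∪ supp P₃) ∧
    IsHole G (supp P₂ ∪ supp P₃)

/-- `G` contains a pyramid as an induced subgraph. -/
def HasPyramid (G : SimpleGraph V) : Prop :=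
  ∃ (a b₁ b₂ b₃ : V) (P₁ : G.Walk a b₁) (P₂ : G.Walk a b₂) (P₃ : G.Walk a b₃),
    G.Adj b₁ b₂ ∧ G.Adj b₂ b₃ ∧ G.Adj b₁ b₃ ∧
    P₁.IsPath ∧ P₂.IsPath ∧ P₃.IsPath ∧
    (∀ v, v ∈ P₁.support → v ∈ P₂.support → v = a) ∧
    (∀ v, v ∈ P₁.support → v ∈ P₃.support → v = a) ∧
    (∀ v, v ∈ P₂.support → v ∈ P₃.support → v = a) ∧
    ¬ (P₁.length = 1 ∧ P₂.length = 1) ∧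
    ¬ (P₁.length = 1 ∧ P₃.length = 1) ∧
    ¬ (P₂.length = 1 ∧ P₃.length = 1) ∧
    IsHole G (supp P₁ ∪ supp P₂) ∧
    IsHole G (supp P₁ ∪ supp P₃) ∧
    IsHole G (supp P₂ ∪ supp P₃)

/-- `G` contains a prism as an induced subgraph. -/
def HasPrism (G : SimpleGraph V) : Prop :=
  ∃ (a₁ a₂ a₃ b₁ b₂ b₃ : V) (P₁ : G.Walk a₁ b₁) (P₂ : G.Walk a₂ b₂)
      (P₃ : G.Walk a₃ b₃),
    G.Adj a₁ a₂ ∧ G.Adj a₂ a₃ ∧ G.Adj a₁ a₃ ∧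
    G.Adj b₁ b₂ ∧ G.Adj b₂ b₃ ∧ G.Adj b₁ b₃ ∧
    P₁.IsPath ∧ P₂.IsPath ∧ P₃.IsPath ∧
    (∀ v, v ∈ P₁.support → v ∉ P₂.support) ∧
    (∀ v, v ∈ P₁.support → v ∉ P₃.support) ∧
    (∀ v, v ∈ P₂.support → v ∉ P₃.support) ∧
    IsHole G (supp P₁ ∪ supp P₂) ∧
    IsHole G (supp P₁ ∪ supp P₃) ∧
    IsHole G (supp P₂ ∪ supp P₃)

/-- `G` contains a turtle as an induced subgraph. -/
def HasTurtle (G : SimpleGraph V) : Prop :=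
  ∃ (a₁ b₁ a₂ b₂ x y : V) (P₁ : G.Walk a₁ b₁) (P₂ : G.Walk a₂ b₂),
    P₁.IsPath ∧ P₂.IsPath ∧
    (∀ v, v ∈ P₁.support → v ∉ P₂.support) ∧
    G.Adj a₁ a₂ ∧ G.Adj b₁ b₂ ∧ G.Adj x y ∧
    x ∉ P₁.support ∧ x ∉ P₂.support ∧ y ∉ P₁.support ∧ y ∉ P₂.support ∧
    IsHole G (supp P₁ ∪ supp P₂) ∧
    3 ≤ (nbrsIn G x (supp P₁)).ncard ∧
    (∀ v ∈ P₂.support, ¬ G.Adj x v) ∧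
    3 ≤ (nbrsIn G y (supp P₂)).ncard ∧
    (∀ v ∈ P₁.support, ¬ G.Adj y v)

/-- `G` contains no theta, pyramid, prism, or turtle as an induced subgraph. -/
def TPPTFree (G : SimpleGraph V) : Prop :=
  ¬ HasTheta G ∧ ¬ HasPyramid G ∧ ¬ HasPrism G ∧ ¬ HasTurtle G

/-- The neighborhood of a set `X`: all vertices outside `X` with a neighbor in `X`. -/
def setNbrs (G : SimpleGraph V) (X : Set V) : Set V :=
  {v | v ∉ X ∧ ∃ x ∈ X, G.Adj x v}

/-- `A` is a connected component of `G ∖ C`. -/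
def IsCompOf (G : SimpleGraph V) (C A : Set V) : Prop :=
  A.Nonempty ∧ Disjoint A C ∧ (G.induce A).Connected ∧
    ∀ a ∈ A, ∀ b : V, G.Adj a b → b ∉ C → b ∈ A

/-- `C` is a minimal separator of `G`: there are two distinct components `L`, `R`
of `G ∖ C` with `N(L) = N(R) = C`. -/
def IsMinSep (G : SimpleGraph V) (C : Set V) : Prop :=
  ∃ L R : Set V, IsCompOf G C L ∧ IsCompOf G C R ∧ L ≠ R ∧
    setNbrs G L = C ∧ setNbrs G R = C

/-- A proper separator: a minimal separator that is not a clique. -/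
def IsProperSep (G : SimpleGraph V) (C : Set V) : Prop :=
  IsMinSep G C ∧ ¬ (∀ a ∈ C, ∀ b ∈ C, a ≠ b → G.Adj a b)

/-- `u` is a minor vertex for the hole `H`: `u ∉ H`, `u` has a neighbor in `H` and
all its neighbors in `H` lie in a path of `H` with at most three vertices. -/
def IsMinorFor (G : SimpleGraph V) (u : V) (H : Set V) : Prop :=
  u ∉ H ∧ (nbrsIn G u H).Nonempty ∧
    ∃ a b c : V, a ∈ H ∧ b ∈ H ∧ c ∈ H ∧ G.Adj a b ∧ G.Adj b c ∧ a ≠ c ∧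
      nbrsIn G u H ⊆ {a, b, c}

/-- `u` is a major vertex for the hole `H`. -/
def IsMajorFor (G : SimpleGraph V) (u : V) (H : Set V) : Prop :=
  u ∉ H ∧ (nbrsIn G u H).Nonempty ∧ ¬ IsMinorFor G u H

/-- `u` is a pendant of `H`: it has a unique neighbor in `H`. -/
def IsPendant (G : SimpleGraph V) (u : V) (H : Set V) : Prop :=
  u ∉ H ∧ ∃ a : V, nbrsIn G u H = {a}

/-- `u` is a cap of `H`: it has exactly two neighbors in `H` and they are adjacent. -/
def IsCap (G : SimpleGraph V) (u : V) (H : Set V) : Prop :=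
  u ∉ H ∧ ∃ a b : V, a ≠ b ∧ G.Adj a b ∧ nbrsIn G u H = {a, b}

/-- `u` is a clone of `y` in `H`: its neighbors in `H` are exactly the three
vertices of a path `x-y-z` of `H`. -/
def IsCloneOf (G : SimpleGraph V) (u y : V) (H : Set V) : Prop :=
  u ∉ H ∧ ∃ x z : V, x ∈ H ∧ y ∈ H ∧ z ∈ H ∧ G.Adj x y ∧ G.Adj y z ∧ x ≠ z ∧
    nbrsIn G u H = {x, y, z}

/-- `u` is a clone (of some vertex) in `H`. -/
def IsClone (G : SimpleGraph V) (u : V) (H : Set V) : Prop :=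
  ∃ y, IsCloneOf G u y H

/-- `P` is a `u`-sector of the hole `H`: a path contained in `H` whose ends are
neighbors of `u` and whose interior is anticomplete to `u`. -/
def IsSector (G : SimpleGraph V) (u : V) (H : Set V) {a b : V} (P : G.Walk a b) : Prop :=
  P.IsPath ∧ (∀ v ∈ P.support, v ∈ H) ∧ G.Adj u a ∧ G.Adj u b ∧
    ∀ v ∈ P.support, v ≠ a → v ≠ b → ¬ G.Adj u v

/-- `u` and `v` are nested with respect to the hole `H`: there are distinct
`a, b ∈ H` such that one `ab`-path of `H` contains all neighbors of `u` in `H`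
and the other `ab`-path of `H` contains all neighbors of `v` in `H`. -/
def Nested (G : SimpleGraph V) (u v : V) (H : Set V) : Prop :=
  ∃ a b : V, a ∈ H ∧ b ∈ H ∧ a ≠ b ∧
    ∃ (P Q : G.Walk a b), P.IsPath ∧ Q.IsPath ∧
      supp P ∪ supp Q = H ∧
      (∀ x, x ∈ P.support → x ∈ Q.support → x = a ∨ x = b) ∧
      (∀ x ∈ H, G.Adj u x → x ∈ P.support) ∧
      (∀ x ∈ H, G.Adj v x → x ∈ Q.support)

/-- `u` is a hub for the hole `H`: its neighbors in `H` are exactly four vertices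
`p, q, r, s` appearing in that order along `H`, with `pq, rs ∈ E(G)` and
`ps, qr ∉ E(G)`. -/
def IsHub (G : SimpleGraph V) (u : V) (H : Set V) : Prop :=
  u ∉ H ∧ ∃ (p q r s : V) (A : G.Walk q r) (B : G.Walk s p),
    p ≠ q ∧ p ≠ r ∧ p ≠ s ∧ q ≠ r ∧ q ≠ s ∧ r ≠ s ∧
    nbrsIn G u H = {p, q, r, s} ∧
    G.Adj p q ∧ G.Adj r s ∧ ¬ G.Adj p s ∧ ¬ G.Adj q r ∧
    A.IsPath ∧ B.IsPath ∧
    (∀ v, v ∈ A.support → v ∉ B.support) ∧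
    supp A ∪ supp B = H

/-- `N` is an extended neighborhood of `w` in the hole `H`. -/
def IsExtNbhd (G : SimpleGraph V) (w : V) (H N : Set V) : Prop :=
  ∃ (x y x' y' : V) (Q : G.Walk x y),
    IsSector G w H Q ∧
    x' ∈ H ∧ x' ∉ Q.support ∧ G.Adj x' x ∧
    y' ∈ H ∧ y' ∉ Q.support ∧ G.Adj y' y ∧
    N = supp Q ∪ ({x', y'} ∩ nbrsIn G w H)

/-- `a` and `b` are distant in `H` with respect to `w`: no extended neighborhood
of `w` in `H` contains both `a` and `b`. -/
def Distant (G : SimpleGraph V) (w : V) (H : Set V) (a b : V) : Prop :=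
  a ∈ H ∧ b ∈ H ∧ ∀ N : Set V, IsExtNbhd G w H N → ¬ (a ∈ N ∧ b ∈ N)

/-- `P` is an `(H, w)`-significant path. -/
def IsSignificant (G : SimpleGraph V) (w : V) (H : Set V) {p q : V}
    (P : G.Walk p q) : Prop :=
  P.IsPath ∧ ∃ a b : V, a ∈ H ∧ G.Adj p a ∧ ¬ G.Adj w a ∧ b ∈ H ∧ G.Adj q b ∧
    Distant G w H a b

/-- `v` is a gem-center for the hole `H`. -/
def IsGemCenter (G : SimpleGraph V) (v : V) (H : Set V) : Prop :=
  5 ≤ H.ncard ∧ ∃ h₁ h₂ h₃ h₄ : V, h₁ ∈ H ∧ h₂ ∈ H ∧ h₃ ∈ H ∧ h₄ ∈ H ∧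
    G.Adj h₁ h₂ ∧ G.Adj h₂ h₃ ∧ G.Adj h₃ h₄ ∧ h₁ ≠ h₃ ∧ h₁ ≠ h₄ ∧ h₂ ≠ h₄ ∧
    nbrsIn G v H = {h₁, h₂, h₃, h₄}

/-- `x` is the center of a star cutset of `G`. -/
def IsStarCutsetCenter (G : SimpleGraph V) (x : V) : Prop :=
  ∃ X : Set V, x ∈ X ∧ (∀ y ∈ X, y ≠ x → G.Adj x y) ∧
    ¬ (G.induce (Xᶜ)).Preconnected

/-- `v` is `(c₁, c₂)`-heavy with respect to the hole `H`. -/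
def IsHeavy (G : SimpleGraph V) (c₁ c₂ : V) (H : Set V) (v : V) : Prop :=
  IsMajorFor G v H ∧ Distant G v H c₁ c₂

/-- The pair of paths `HL`, `HR` forms a `(C, c₁, c₂)`-hole with frame
`(c₁, c₂, ℓ₁', ℓ₁, r₁, r₁', ℓ₂', ℓ₂, r₂, r₂')`, where `L` and `R` are the two
full components of the proper separator `C`. -/
def IsCHoleWithFrame (G : SimpleGraph V) (C L R : Set V)
    (c₁ c₂ ℓ₁ ℓ₁' ℓ₂ ℓ₂' r₁ r₁' r₂ r₂' : V) (HL HR : G.Walk c₁ c₂) : Prop :=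
  HL.IsPath ∧ HR.IsPath ∧
  (∀ v, v ∈ HL.support → v ∈ HR.support → v = c₁ ∨ v = c₂) ∧
  IsHole G (supp HL ∪ supp HR) ∧
  c₁ ∈ C ∧ c₂ ∈ C ∧
  (∀ v, v ∈ HL.support → v ≠ c₁ → v ≠ c₂ → v ∈ L) ∧
  (∀ v, v ∈ HR.support → v ≠ c₁ → v ≠ c₂ → v ∈ R) ∧
  (supp HL ∪ supp HR) ∩ C = {c₁, c₂} ∧
  ℓ₁ ∈ HL.support ∧ ℓ₁ ≠ c₂ ∧ G.Adj c₁ ℓ₁ ∧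
  ℓ₂ ∈ HL.support ∧ ℓ₂ ≠ c₁ ∧ G.Adj c₂ ℓ₂ ∧
  r₁ ∈ HR.support ∧ r₁ ≠ c₂ ∧ G.Adj c₁ r₁ ∧
  r₂ ∈ HR.support ∧ r₂ ≠ c₁ ∧ G.Adj c₂ r₂ ∧
  ((ℓ₁ = ℓ₂ ∧ ℓ₁' = ℓ₁) ∨
    (ℓ₁ ≠ ℓ₂ ∧ ℓ₁' ∈ HL.support ∧ ℓ₁' ≠ c₁ ∧ ℓ₁' ≠ c₂ ∧ G.Adj ℓ₁ ℓ₁')) ∧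
  ((ℓ₁ = ℓ₂ ∧ ℓ₂' = ℓ₂) ∨
    (ℓ₁ ≠ ℓ₂ ∧ ℓ₂' ∈ HL.support ∧ ℓ₂' ≠ c₁ ∧ ℓ₂' ≠ c₂ ∧ G.Adj ℓ₂ ℓ₂')) ∧
  ((r₁ = r₂ ∧ r₁' = r₁) ∨
    (r₁ ≠ r₂ ∧ r₁' ∈ HR.support ∧ r₁' ≠ c₁ ∧ r₁' ≠ c₂ ∧ G.Adj r₁ r₁')) ∧
  ((r₁ = r₂ ∧ r₂' = r₂) ∨
    (r₁ ≠ r₂ ∧ r₂' ∈ HR.support ∧ r₂' ≠ c₁ ∧ r₂' ≠ c₂ ∧ G.Adj r₂ r₂'))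

/-- The 3-dimensional hypercube graph: vertices are elements of `{0,1}³`, two
vertices being adjacent exactly when they differ in one coordinate. -/
def cubeGraph : SimpleGraph (Fin 3 → Bool) where
  Adj x y := ∃! i, x i ≠ y i
  symm := by
    refine ⟨?_⟩
    rintro x y ⟨i, hi, hj⟩
    exact ⟨i, Ne.symm hi, fun j h => hj j (Ne.symm h)⟩
  loopless := by
    refine ⟨?_⟩
    rintro x ⟨i, hi, -⟩
    exact hi rfl

/-! Suppose `u` and `v` have no common neighbour in `H`. Each of them has at least three
neighbours in `H`: a clone has exactly three, and a major vertex with at most two has two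
non-adjacent ones `m, n` (otherwise it would be minor), so that the two `mn`-paths of `H`
together with `m-u-n` form a theta. Let `P` and `Q` be the two `ab`-paths of `H` carrying
the neighbours of `u` and of `v`. No end `a, b` is seen by both `u` and `v`, so handing each
end to the side whose vertex sees it (to `Q` if neither does) cuts `H` into two disjoint
paths joined by two edges, one seen only by `u` and the other only by `v`; with the edge
`uv` this is a turtle. -/

variable {G : SimpleGraph V} {a b m n u v w : V}

lemma supp_finite (P : G.Walk a b) : (supp P).Finite :=
  P.support.finite_toSet

lemma supp_reverse (P : G.Walk a b) : supp P.reverse = supp P := by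
  ext; simp [supp]

lemma ncard_supp {P : G.Walk a b} (hP : P.IsPath) : (supp P).ncard = P.length + 1 := by
  classical
  have : supp P = ↑P.support.toFinset := by ext; simp [supp]
  rw [this, Set.ncard_coe_finset, List.toFinset_card_of_nodup hP.support_nodup,
    Walk.length_support]

lemma two_le_length_of_not_adj (P : G.Walk a b) (hab : a ≠ b) (hadj : ¬ G.Adj a b) :
    2 ≤ P.length := by
  by_contra! h
  interval_cases hl : P.length
  exacts [hab (Walk.eq_of_length_eq_zero hl), hadj (Walk.adj_of_length_eq_one hl)]

lemma eq_or_eq_of_mem_support_of_length_le_one {P : G.Walk a b} (hP : P.length ≤ 1)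
    (hw : w ∈ P.support) : w = a ∨ w = b := by
  match P, hP, hw with
  | .nil, _, hw => exact Or.inl (by simpa using hw)
  | .cons _ .nil, _, hw => simpa using hw
  | .cons _ (.cons _ _), hP, _ => simp at hP

lemma start_notMem_support_tail {P : G.Walk a b} (hP : P.IsPath) : a ∉ P.support.tail := by
  have hnd := hP.support_nodup
  rw [← Walk.cons_tail_support] at hnd
  exact (List.nodup_cons.mp hnd).1

lemma exists_adj_adj_of_mem_support {P : G.Walk a b} (hP : P.IsPath)
    (hw : w ∈ P.support) (hwa : w ≠ a) (hwb : w ≠ b) :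
    ∃ s ∈ P.support, ∃ t ∈ P.support, s ≠ t ∧ G.Adj w s ∧ G.Adj w t := by
  obtain ⟨p, q, -, -, rfl⟩ := hP.mem_support_iff_exists_append.mp hw
  have hp : ¬ p.Nil := Walk.not_nil_of_ne hwa.symm
  have hq : ¬ q.Nil := Walk.not_nil_of_ne hwb
  have hs : p.penultimate ∈ p.support := p.getVert_mem_support _
  have ht : q.snd ∈ q.support := q.getVert_mem_support 1
  refine ⟨p.penultimate, (Walk.mem_support_append_iff _ _).mpr (Or.inl hs),
    q.snd, (Walk.mem_support_append_iff _ _).mpr (Or.inr ht),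
    hP.ne_of_mem_support_of_append (Walk.adj_snd hq).ne.symm hs ht,
    (Walk.adj_penultimate hp).symm, Walk.adj_snd hq⟩

lemma exists_isPath_delete_start {P : G.Walk a b} (hP : P.IsPath) (p : Prop)
    (hne : p → ∃ w ∈ P.support, w ≠ a) :
    ∃ a' : V, ∃ P' : G.Walk a' b, P'.IsPath ∧
      (∀ w, w ∈ P'.support ↔ w ∈ P.support ∧ (p → w ≠ a)) ∧
      (p → G.Adj a a') ∧ (¬ p → a' = a) := by
  by_cases hp : p
  · obtain ⟨w, hw, hwa⟩ := hne hp
    have hnil : ¬ P.Nil := fun h => hwa (by simpa [Walk.nil_iff_support_eq.mp h] using hw)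
    refine ⟨P.snd, P.tail, hP.tail, fun w => ?_, fun _ => Walk.adj_snd hnil, (absurd hp ·)⟩
    rw [Walk.support_tail_of_not_nil _ hnil]
    exact ⟨fun h => ⟨List.mem_of_mem_tail h,
        fun _ hwa => start_notMem_support_tail hP (hwa ▸ h)⟩,
      fun h => ((Walk.mem_support_iff _).mp h.1).resolve_left (h.2 hp)⟩
  · exact ⟨a, P, hP, by simp [hp], (absurd · hp), fun _ => rfl⟩

lemma exists_isPath_delete_ends {P : G.Walk a b} (hP : P.IsPath) (p q : Prop)
    (hne : ∃ w ∈ P.support, (p → w ≠ a) ∧ (q → w ≠ b)) :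
    ∃ a' b' : V, ∃ P' : G.Walk a' b', P'.IsPath ∧
      (∀ w, w ∈ P'.support ↔ w ∈ P.support ∧ (p → w ≠ a) ∧ (q → w ≠ b)) ∧
      (p → G.Adj a a') ∧ (¬ p → a' = a) ∧ (q → G.Adj b b') ∧ (¬ q → b' = b) := by
  obtain ⟨w, hw, hwa, hwb⟩ := hne
  obtain ⟨a', P₁, hP₁, hmem₁, ha₁, ha₁'⟩ :=
    exists_isPath_delete_start hP p fun hp => ⟨w, hw, hwa hp⟩
  obtain ⟨b', P₂, hP₂, hmem₂, hb₂, hb₂'⟩ :=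
    exists_isPath_delete_start hP₁.reverse q fun hq =>
      ⟨w, by simpa using (hmem₁ w).mpr ⟨hw, hwa⟩, hwb hq⟩
  refine ⟨a', b', P₂.reverse, hP₂.reverse, fun x => ?_, ha₁, ha₁', hb₂, hb₂'⟩
  simp only [Walk.support_reverse, List.mem_reverse, hmem₂, hmem₁, and_assoc]

lemma nbrsIn_subset (G : SimpleGraph V) (v : V) (H : Set V) : nbrsIn G v H ⊆ H :=
  fun _ h => h.1

lemma nbrsIn_union (G : SimpleGraph V) (w : V) (A B : Set V) :
    nbrsIn G w (A ∪ B) = nbrsIn G w A ∪ nbrsIn G w B := by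
  ext; simp [nbrsIn, or_and_right]

lemma nbrsIn_singleton_of_adj (h : G.Adj w u) : nbrsIn G w {u} = {u} := by
  ext; simp +contextual [nbrsIn, h]

lemma nbrsIn_singleton_of_not_adj (h : ¬ G.Adj w u) : nbrsIn G w {u} = ∅ := by
  ext; simp +contextual [nbrsIn, h]

lemma nbrsIn_eq_of_subset {T H : Set V} (hT : T ⊆ H) (hw : ∀ x ∈ H, G.Adj w x → x ∈ T) :
    nbrsIn G w T = nbrsIn G w H :=
  Set.ext fun x => ⟨fun h => ⟨hT h.1, h.2⟩, fun h => ⟨hw x h.1 h.2, h.2⟩⟩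

lemma IsHole.nbrsIn_eq_pair {H : Set V} (hH : IsHole G H) (hw : w ∈ H) {s t : V}
    (hs : s ∈ H) (ht : t ∈ H) (hst : s ≠ t) (hws : G.Adj w s) (hwt : G.Adj w t) :
    nbrsIn G w H = {s, t} := by
  have hsub : ({s, t} : Set V) ⊆ nbrsIn G w H := by
    rintro z (rfl | rfl)
    exacts [⟨hs, hws⟩, ⟨ht, hwt⟩]
  exact (Set.eq_of_subset_of_ncard_le hsub (by rw [hH.2.2.2 w hw, Set.ncard_pair hst])
    (hH.1.subset (nbrsIn_subset G w H))).symm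

lemma IsCloneOf.ncard_nbrsIn {H : Set V} {y : V} (hu : IsCloneOf G u y H) :
    (nbrsIn G u H).ncard = 3 := by
  obtain ⟨-, x, z, -, -, -, hxy, hyz, hxz, heq⟩ := hu
  exact heq ▸ Set.ncard_eq_three.mpr ⟨x, y, z, hxy.ne, hxz, hyz.ne, rfl⟩

structure IsSplitInto (H : Set V) (P Q : G.Walk a b) : Prop where
  isPath_left : P.IsPath
  isPath_right : Q.IsPath
  supp_union : supp P ∪ supp Q = H
  eq_or_eq_of_mem : ∀ x, x ∈ P.support → x ∈ Q.support → x = a ∨ x = b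

namespace IsSplitInto

variable {H : Set V} {P Q : G.Walk a b}

lemma symm (hs : IsSplitInto H P Q) : IsSplitInto H Q P :=
  ⟨hs.isPath_right, hs.isPath_left, Set.union_comm (supp P) _ ▸ hs.supp_union,
    fun x hQ hP => hs.eq_or_eq_of_mem x hP hQ⟩

lemma reverse (hs : IsSplitInto H P Q) : IsSplitInto H P.reverse Q.reverse :=
  ⟨hs.isPath_left.reverse, hs.isPath_right.reverse,
    by rw [supp_reverse, supp_reverse, hs.supp_union],
    fun x h₁ h₂ => (hs.eq_or_eq_of_mem x (by simpa using h₁) (by simpa using h₂)).symm⟩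

lemma mem_left (hs : IsSplitInto H P Q) (hx : w ∈ P.support) : w ∈ H :=
  hs.supp_union ▸ Or.inl hx

lemma mem_right (hs : IsSplitInto H P Q) (hx : w ∈ Q.support) : w ∈ H :=
  hs.supp_union ▸ Or.inr hx

lemma mem_or_mem (hs : IsSplitInto H P Q) (hx : w ∈ H) : w ∈ P.support ∨ w ∈ Q.support := by
  rw [← hs.supp_union] at hx
  exact hx

lemma isCycle_append_reverse (hs : IsSplitInto H P Q) (hH : 3 ≤ H.ncard) :
    (P.append Q.reverse).IsCycle := by
  refine hs.isPath_left.isCycle_append hs.isPath_right.reverse ?_ ?_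
  · intro x hxP hxQ
    have hxQ' : x ∈ Q.support := by
      simpa using List.mem_of_mem_tail hxQ
    rcases hs.eq_or_eq_of_mem x (List.mem_of_mem_tail hxP) hxQ' with rfl | rfl
    · exact start_notMem_support_tail hs.isPath_left hxP
    · exact start_notMem_support_tail hs.isPath_right.reverse hxQ
  · by_contra! hlen
    have hsub : H ⊆ {a, b} := fun x hx =>
      (hs.mem_or_mem hx).elim (eq_or_eq_of_mem_support_of_length_le_one hlen.1)
        (eq_or_eq_of_mem_support_of_length_le_one (by simpa using hlen.2))
    have := (Set.ncard_le_ncard hsub (Set.toFinite _)).trans (Set.ncard_insert_le a {b})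
    rw [Set.ncard_singleton] at this
    omega

lemma exists_of_ne (hs : IsSplitInto H P Q) (hH : 3 ≤ H.ncard) (hm : m ∈ H) (hn : n ∈ H)
    (hmn : m ≠ n) : ∃ T₁ T₂ : G.Walk m n, IsSplitInto H T₁ T₂ := by
  classical
  -- rotate the cycle `P ++ Q⁻¹` to start at `m`, then cut it at `n`
  set c := P.append Q.reverse
  have hcH : ∀ x, x ∈ c.support ↔ x ∈ H := by
    intro x
    rw [Walk.mem_support_append_iff, Walk.support_reverse, List.mem_reverse, ← hs.supp_union]
    rfl
  set c' := c.rotate m ((hcH m).2 hm)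
  have hc' : c'.IsCycle := (hs.isCycle_append_reverse hH).rotate _
  have hc'H : ∀ x, x ∈ c'.support ↔ x ∈ H :=
    fun x => (Walk.mem_support_rotate_iff ..).trans (hcH x)
  have hnc' : n ∈ c'.support := (hc'H n).2 hn
  set T₁ := c'.takeUntil n hnc'
  set T₂ := c'.dropUntil n hnc'
  have hspec : T₁.append T₂ = c' := c'.take_spec hnc'
  rw [← hspec] at hc' hc'H
  refine ⟨T₁, T₂.reverse, hc'.isPath_of_append_left (Walk.not_nil_of_ne hmn.symm),
    (hc'.isPath_of_append_right (Walk.not_nil_of_ne hmn)).reverse, ?_, ?_⟩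
  · ext x
    rw [← hc'H, Walk.mem_support_append_iff]
    simp [supp]
  · intro x h₁ h₂
    by_contra! hx
    have hnd := hc'.support_nodup
    rw [Walk.tail_support_append, List.nodup_append] at hnd
    rw [Walk.support_reverse, List.mem_reverse] at h₂
    exact hnd.2.2 x ((Walk.mem_support_iff _).mp h₁ |>.resolve_left hx.1) x
      ((Walk.mem_support_iff _).mp h₂ |>.resolve_left hx.2) rfl

lemma exists_disjoint_paths (hs : IsSplitInto H P Q) (hab : a ≠ b) (A B : Prop)
    (hP : ∃ w ∈ P.support, (¬ A → w ≠ a) ∧ (¬ B → w ≠ b))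
    (hQ : ∃ w ∈ Q.support, (A → w ≠ a) ∧ (B → w ≠ b)) :
    ∃ a₁ b₁ a₂ b₂ : V, ∃ (P₁ : G.Walk a₁ b₁) (Q₁ : G.Walk a₂ b₂),
      P₁.IsPath ∧ Q₁.IsPath ∧ (∀ w, w ∈ P₁.support → w ∉ Q₁.support) ∧
      G.Adj a₁ a₂ ∧ G.Adj b₁ b₂ ∧ supp P₁ ∪ supp Q₁ = H ∧
      (∀ w, w ∈ P₁.support ↔ w ∈ P.support ∧ (¬ A → w ≠ a) ∧ (¬ B → w ≠ b)) ∧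
      (∀ w, w ∈ Q₁.support ↔ w ∈ Q.support ∧ (A → w ≠ a) ∧ (B → w ≠ b)) := by
  obtain ⟨a₁, b₁, P₁, hP₁, hmemP, ha₁, ha₁', hb₁, hb₁'⟩ :=
    exists_isPath_delete_ends hs.isPath_left (¬ A) (¬ B) hP
  obtain ⟨a₂, b₂, Q₁, hQ₁, hmemQ, ha₂, ha₂', hb₂, hb₂'⟩ :=
    exists_isPath_delete_ends hs.isPath_right A B hQ
  refine ⟨a₁, b₁, a₂, b₂, P₁, Q₁, hP₁, hQ₁, ?_, ?_, ?_, ?_, hmemP, hmemQ⟩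
  · intro w hw₁ hw₂
    rw [hmemP] at hw₁
    rw [hmemQ] at hw₂
    rcases hs.eq_or_eq_of_mem w hw₁.1 hw₂.1 with rfl | rfl
    · by_cases hA : A
      exacts [hw₂.2.1 hA rfl, hw₁.2.1 hA rfl]
    · by_cases hB : B
      exacts [hw₂.2.2 hB rfl, hw₁.2.2 hB rfl]
  · by_cases hA : A
    · rw [ha₁' (not_not.mpr hA)]; exact ha₂ hA
    · rw [ha₂' hA]; exact (ha₁ hA).symm
  · by_cases hB : B
    · rw [hb₁' (not_not.mpr hB)]; exact hb₂ hB
    · rw [hb₂' hB]; exact (hb₁ hB).symm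
  · rw [← hs.supp_union]
    ext w
    simp only [supp, Set.mem_union, Set.mem_ofPred_eq, hmemP, hmemQ]
    refine ⟨fun h => h.imp And.left And.left, fun h => ?_⟩
    by_cases hwa : w = a
    · subst hwa
      by_cases hA : A
      exacts [Or.inl ⟨P.start_mem_support, (absurd hA ·), fun _ => hab⟩,
        Or.inr ⟨Q.start_mem_support, (absurd · hA), fun _ => hab⟩]
    by_cases hwb : w = b
    · subst hwb
      by_cases hB : B
      exacts [Or.inl ⟨P.end_mem_support, fun _ => hab.symm, (absurd hB ·)⟩,
        Or.inr ⟨Q.end_mem_support, fun _ => hab.symm, (absurd · hB)⟩]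
    exact h.imp (⟨·, fun _ => hwa, fun _ => hwb⟩) (⟨·, fun _ => hwa, fun _ => hwb⟩)

lemma nbrsIn_start (hH : IsHole G H) (hs : IsSplitInto H P Q) (hab : a ≠ b)
    (hadj : ¬ G.Adj a b) : nbrsIn G a (supp P) = {P.snd} := by
  have hadjP := Walk.adj_snd (Walk.not_nil_of_ne (p := P) hab)
  have hadjQ := Walk.adj_snd (Walk.not_nil_of_ne (p := Q) hab)
  have hsndQ : Q.snd ∉ P.support := fun h =>
    (hs.eq_or_eq_of_mem _ h (Q.getVert_mem_support 1)).elim hadjQ.ne.symm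
      fun h' => hadj (h' ▸ hadjQ)
  have hne : P.snd ≠ Q.snd := fun h => hsndQ (h ▸ P.getVert_mem_support 1)
  have hpair := hH.nbrsIn_eq_pair (hs.mem_left P.start_mem_support)
    (hs.mem_left (P.getVert_mem_support 1)) (hs.mem_right (Q.getVert_mem_support 1))
    hne hadjP hadjQ
  ext z
  refine ⟨fun hz => ?_, ?_⟩
  · have hzH : z ∈ nbrsIn G a H := ⟨hs.mem_left hz.1, hz.2⟩
    rw [hpair] at hzH
    exact hzH.resolve_right fun h => hsndQ (by
      obtain rfl := Set.mem_singleton_iff.mp h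
      exact hz.1)
  · rintro rfl
    exact ⟨P.getVert_mem_support 1, hadjP⟩

lemma exists_nbrsIn_eq_pair (hH : IsHole G H) (hs : IsSplitInto H P Q) (hw : w ∈ P.support)
    (hwa : w ≠ a) (hwb : w ≠ b) : ∃ s t, s ≠ t ∧ nbrsIn G w (supp P) = {s, t} := by
  obtain ⟨s, hsP, t, htP, hst, hws, hwt⟩ :=
    exists_adj_adj_of_mem_support hs.isPath_left hw hwa hwb
  have hpair := hH.nbrsIn_eq_pair (hs.mem_left hw) (hs.mem_left hsP) (hs.mem_left htP) hst
    hws hwt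
  refine ⟨s, t, hst, subset_antisymm (fun z hz => hpair ▸ ⟨hs.mem_left hz.1, hz.2⟩) ?_⟩
  rintro z (rfl | rfl)
  exacts [⟨hsP, hws⟩, ⟨htP, hwt⟩]

lemma isHole_union_singleton (hH : IsHole G H) (hs : IsSplitInto H P Q) (hab : a ≠ b)
    (hadj : ¬ G.Adj a b) (huH : u ∉ H) (hu : nbrsIn G u H = {a, b}) :
    IsHole G (supp P ∪ {u}) := by
  have hua : G.Adj u a := (hu.symm ▸ Set.mem_insert a {b} : a ∈ nbrsIn G u H).2
  have hub : G.Adj u b := (hu.symm ▸ Set.mem_insert_of_mem a rfl : b ∈ nbrsIn G u H).2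
  have huP : u ∉ supp P := fun h => huH (hs.mem_left h)
  refine ⟨(supp_finite P).union (Set.finite_singleton u), ?_, ?_, ?_⟩
  · rw [Set.union_singleton, Set.ncard_insert_of_notMem huP (supp_finite P),
      ncard_supp hs.isPath_left]
    have := two_le_length_of_not_adj P hab hadj
    omega
  · have : supp P ∪ {u} = supp (P.concat hub.symm) := by
      ext; simp [supp, Walk.support_concat, or_comm]
    exact this ▸ (P.concat hub.symm).connected_induce_support
  have hend : ∀ x y, nbrsIn G x (supp P) = {y} → G.Adj u x →
      (nbrsIn G x (supp P ∪ {u})).ncard = 2 := by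
    intro x y hxy hux
    have hy : y ∈ supp P := nbrsIn_subset G x _ (hxy ▸ rfl)
    rw [nbrsIn_union, hxy, nbrsIn_singleton_of_adj hux.symm, Set.singleton_union,
      Set.ncard_pair (fun h : y = u => huP (h ▸ hy))]
  rintro w (hw | rfl)
  · by_cases hwa : w = a
    · subst hwa
      exact hend w _ (hs.nbrsIn_start hH hab hadj) hua
    by_cases hwb : w = b
    · subst hwb
      refine hend w P.reverse.snd ?_ hub
      rw [← supp_reverse P]
      exact hs.reverse.nbrsIn_start hH hab.symm (fun h => hadj h.symm)
    obtain ⟨s, t, hst, hpair⟩ := hs.exists_nbrsIn_eq_pair hH hw hwa hwb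
    have huw : ¬ G.Adj w u := fun h => by
      have : w ∈ nbrsIn G u H := ⟨hs.mem_left hw, h.symm⟩
      rw [hu] at this
      exact this.elim hwa hwb
    rw [nbrsIn_union, nbrsIn_singleton_of_not_adj huw, Set.union_empty, hpair,
      Set.ncard_pair hst]
  · have : nbrsIn G w (supp P) = {a, b} := by
      refine subset_antisymm (fun z hz => hu ▸ ⟨hs.mem_left hz.1, hz.2⟩) ?_
      rintro z (rfl | rfl)
      exacts [⟨P.start_mem_support, hua⟩, ⟨P.end_mem_support, hub⟩]
    rw [nbrsIn_union, nbrsIn_singleton_of_not_adj (G.loopless.irrefl w), Set.union_empty,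
      this, Set.ncard_pair hab]

end IsSplitInto

lemma hasTheta_of_nbrsIn_eq_pair {H : Set V} {P Q : G.Walk a b} (hH : IsHole G H)
    (hs : IsSplitInto H P Q) (huH : u ∉ H) (hu : nbrsIn G u H = {m, n}) (hmn : m ≠ n)
    (hadj : ¬ G.Adj m n) : HasTheta G := by
  have hm : m ∈ nbrsIn G u H := hu ▸ Set.mem_insert m {n}
  have hn : n ∈ nbrsIn G u H := hu ▸ Set.mem_insert_of_mem m rfl
  obtain ⟨T₁, T₂, ht⟩ := hs.exists_of_ne (by linarith [hH.2.1]) hm.1 hn.1 hmn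
  let T₃ : G.Walk m n := .cons hm.2.symm (.cons hn.2 .nil)
  have hT₃ : ∀ x, x ∈ T₃.support ↔ x = m ∨ x = u ∨ x = n := by simp [T₃]
  have hum : u ≠ m := fun h => huH (h ▸ hm.1)
  have hun : u ≠ n := fun h => huH (h ▸ hn.1)
  have hsupp₃ : ∀ T : G.Walk m n, supp T ∪ supp T₃ = supp T ∪ {u} := by
    intro T
    ext x
    simp only [supp, Set.mem_union, Set.mem_ofPred_eq, hT₃, Set.mem_singleton_iff]
    grind [T.start_mem_support, T.end_mem_support]
  have hdisj₃ : ∀ T : G.Walk m n, (∀ x ∈ T.support, x ∈ H) →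
      ∀ x, x ∈ T.support → x ∈ T₃.support → x = m ∨ x = n := by
    intro T hTH x hx hx₃
    rcases (hT₃ x).mp hx₃ with rfl | rfl | rfl
    exacts [Or.inl rfl, absurd (hTH x hx) huH, Or.inr rfl]
  refine ⟨m, n, T₁, T₂, T₃, hmn, hadj, ht.isPath_left, ht.isPath_right, ?_,
    two_le_length_of_not_adj T₁ hmn hadj, two_le_length_of_not_adj T₂ hmn hadj, le_refl _,
    ht.eq_or_eq_of_mem, hdisj₃ T₁ fun _ => ht.mem_left, hdisj₃ T₂ fun _ => ht.mem_right,
    ht.supp_union ▸ hH, ?_, ?_⟩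
  · simp [T₃, Walk.isPath_def, hmn, hum.symm, hun]
  · rw [hsupp₃]
    exact ht.isHole_union_singleton hH hmn hadj huH hu
  · rw [hsupp₃]
    exact ht.symm.isHole_union_singleton hH hmn hadj huH hu

lemma three_le_ncard_nbrsIn_of_isMajorFor {H : Set V} {P Q : G.Walk a b}
    (hθ : ¬ HasTheta G) (hH : IsHole G H) (hs : IsSplitInto H P Q) (hu : IsMajorFor G u H) :
    3 ≤ (nbrsIn G u H).ncard := by
  obtain ⟨huH, hne, hminor⟩ := hu
  by_contra! hlt
  have hpos := (Set.ncard_pos (hH.1.subset (nbrsIn_subset G u H))).2 hne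
  interval_cases hc : (nbrsIn G u H).ncard
  · obtain ⟨m, hm⟩ := Set.ncard_eq_one.mp hc
    have hmH : m ∈ nbrsIn G u H := hm ▸ rfl
    obtain ⟨s, t, hst, hpair⟩ := Set.ncard_eq_two.mp (hH.2.2.2 m hmH.1)
    have hs' : s ∈ nbrsIn G m H := hpair ▸ Set.mem_insert s {t}
    have ht' : t ∈ nbrsIn G m H := hpair ▸ Set.mem_insert_of_mem s rfl
    exact hminor ⟨huH, hne, s, m, t, hs'.1, hmH.1, ht'.1, hs'.2.symm, ht'.2, hst,
      hm ▸ Set.singleton_subset_iff.mpr (Set.mem_insert_of_mem s (Set.mem_insert m {t}))⟩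
  · obtain ⟨m, n, hmn, hpair⟩ := Set.ncard_eq_two.mp hc
    have hm : m ∈ nbrsIn G u H := hpair ▸ Set.mem_insert m {n}
    have hn : n ∈ nbrsIn G u H := hpair ▸ Set.mem_insert_of_mem m rfl
    by_cases hadj : G.Adj m n
    · obtain ⟨t, ht, htm⟩ := Set.exists_ne_of_one_lt_ncard
        (by rw [hH.2.2.2 n hn.1]; norm_num : 1 < (nbrsIn G n H).ncard) m
      have hsub : ({m, n} : Set V) ⊆ {m, n, t} :=
        Set.insert_subset_insert (Set.singleton_subset_iff.mpr (Set.mem_insert n {t}))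
      exact hminor ⟨huH, hne, m, n, t, hm.1, hn.1, ht.1, hadj, ht.2, htm.symm, hpair ▸ hsub⟩
    · exact hθ (hasTheta_of_nbrsIn_eq_pair hH hs huH hpair hmn hadj)

lemma notMem_of_isMajorFor_or_isClone {H : Set V} (hu : IsMajorFor G u H ∨ IsClone G u H) :
    u ∉ H := by
  rcases hu with h | ⟨y, h⟩
  exacts [h.1, h.1]

lemma three_le_ncard_nbrsIn {H : Set V} {P Q : G.Walk a b} (hθ : ¬ HasTheta G)
    (hH : IsHole G H) (hs : IsSplitInto H P Q) (hu : IsMajorFor G u H ∨ IsClone G u H) :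
    3 ≤ (nbrsIn G u H).ncard := by
  rcases hu with hu | ⟨y, hu⟩
  exacts [three_le_ncard_nbrsIn_of_isMajorFor hθ hH hs hu, hu.ncard_nbrsIn.ge]

lemma hasTurtle_of_isSplitInto {H : Set V} {P Q : G.Walk a b} (hH : IsHole G H)
    (hs : IsSplitInto H P Q) (hab : a ≠ b) (huH : u ∉ H) (hvH : v ∉ H) (huv : G.Adj u v)
    (hNu : ∀ x ∈ H, G.Adj u x → x ∈ P.support) (hNv : ∀ x ∈ H, G.Adj v x → x ∈ Q.support)
    (hu : 3 ≤ (nbrsIn G u H).ncard) (hv : 3 ≤ (nbrsIn G v H).ncard)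
    (hcommon : ∀ x ∈ H, G.Adj u x → ¬ G.Adj v x) : HasTurtle G := by
  have hfin : ∀ z, (nbrsIn G z H).Finite := fun z => hH.1.subset (nbrsIn_subset G z H)
  obtain ⟨x, hxH, hux⟩ := (Set.ncard_pos (hfin u)).1 (by omega)
  obtain ⟨y, hyH, hvy⟩ := (Set.ncard_pos (hfin v)).1 (by omega)
  have hNu' : ∀ z ∈ H, G.Adj u z →
      z ∈ P.support ∧ (¬ G.Adj u a → z ≠ a) ∧ (¬ G.Adj u b → z ≠ b) := fun z hz huz =>
    ⟨hNu z hz huz, fun h hza => h (hza ▸ huz), fun h hzb => h (hzb ▸ huz)⟩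
  have hNv' : ∀ z ∈ H, G.Adj v z →
      z ∈ Q.support ∧ (G.Adj u a → z ≠ a) ∧ (G.Adj u b → z ≠ b) := fun z hz hvz =>
    ⟨hNv z hz hvz, fun h hza => hcommon z hz (hza ▸ h) hvz,
      fun h hzb => hcommon z hz (hzb ▸ h) hvz⟩
  obtain ⟨a₁, b₁, a₂, b₂, P₁, Q₁, hP₁, hQ₁, hdisj, ha, hb, hunion, hmemP, hmemQ⟩ :=
    hs.exists_disjoint_paths hab (G.Adj u a) (G.Adj u b) ⟨x, hNu' x hxH hux⟩
      ⟨y, hNv' y hyH hvy⟩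
  have hNuP₁ : ∀ z ∈ H, G.Adj u z → z ∈ P₁.support := fun z hz huz =>
    (hmemP z).2 (hNu' z hz huz)
  have hNvQ₁ : ∀ z ∈ H, G.Adj v z → z ∈ Q₁.support := fun z hz hvz =>
    (hmemQ z).2 (hNv' z hz hvz)
  have hmemH : ∀ z, z ∈ P₁.support ∨ z ∈ Q₁.support → z ∈ H := fun z hz => hunion ▸ hz
  refine ⟨a₁, b₁, a₂, b₂, u, v, P₁, Q₁, hP₁, hQ₁, hdisj, ha, hb, huv,
    fun h => huH (hmemH u (Or.inl h)), fun h => huH (hmemH u (Or.inr h)),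
    fun h => hvH (hmemH v (Or.inl h)), fun h => hvH (hmemH v (Or.inr h)), hunion ▸ hH,
    ?_, fun z hz huz => hdisj z (hNuP₁ z (hmemH z (Or.inr hz)) huz) hz,
    ?_, fun z hz hvz => hdisj z hz (hNvQ₁ z (hmemH z (Or.inl hz)) hvz)⟩
  · rwa [nbrsIn_eq_of_subset (T := supp P₁) (fun z hz => hmemH z (Or.inl hz)) hNuP₁]
  · rwa [nbrsIn_eq_of_subset (T := supp Q₁) (fun z hz => hmemH z (Or.inr hz)) hNvQ₁]

/-- In a (theta, pyramid, prism, turtle)-free graph, if `u` and `v` are each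
major for a hole `H` or clones in `H`, are nested with respect to `H`, and
`uv ∈ E(G)`, then `u` and `v` have a common neighbor in `H`. -/
theorem nested_adjacent_common_neighbor {V : Type*} (G : SimpleGraph V)
    (hG : TPPTFree G) (H : Set V) (hH : IsHole G H) (u v : V)
    (hu : IsMajorFor G u H ∨ IsClone G u H)
    (hv : IsMajorFor G v H ∨ IsClone G v H)
    (hnest : Nested G u v H) (huv : G.Adj u v) :
    ∃ w ∈ H, G.Adj u w ∧ G.Adj v w := by
  obtain ⟨a, b, -, -, hab, P, Q, hP, hQ, hunion, hPQ, hNu, hNv⟩ := hnest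
  have hs : IsSplitInto H P Q := ⟨hP, hQ, hunion, hPQ⟩
  by_contra! hcommon
  exact hG.2.2.2 (hasTurtle_of_isSplitInto hH hs hab (notMem_of_isMajorFor_or_isClone hu)
    (notMem_of_isMajorFor_or_isClone hv) huv hNu hNv (three_le_ncard_nbrsIn hG.1 hH hs hu)
    (three_le_ncard_nbrsIn hG.1 hH hs.symm hv) hcommon)

end Paper
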